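/- arXiv:1811.01235 — 6 statements merged into one kernel-verified Lean document; each statement's English description precedes it below -/
import Mathlib

section
/- Let (Λ, δ) be a population protocol, let Δ ⊆ Λ be such that the protocol is Δ-ordered, let d = |Δ| and Γ = Λ ∖ Δ. Then there exist matrices C1 ∈ ℕ^{Γ×Δ} and C2 ∈ ℕ^{Λ×Δ}, with every entry of C1 strictly less than 2^{d+1} and every entry of C2 strictly less than 2^d, such that for all c^Δ ∈ ℕ^Δ, setting e = C2·c^Δ ∈ ℕ^Λ and z^Γ = C1·c^Δ ∈ ℕ^Γ, the configuration c^Δ + e can reach z^Γ, i.e., c^Δ + e ⟹ z^Γ. -/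
/-! Basic definitions for (leaderless) population protocols:
configurations, transitions, paths, reachability, bottlenecks, stability. -/

namespace PP

variable {Λ : Type*}

open Classical in
/-- The configuration consisting of a single agent in state `s`. -/
noncomputable def single (s : Λ) : Λ → ℕ := fun t => if t = s then 1 else 0

/-- The configuration consisting of the two agents of the ordered pair `r`. -/
noncomputable def pairConf (r : Λ × Λ) : Λ → ℕ := single r.1 + single r.2

/-- The transition with input pair `r` is applicable to configuration `c`. -/
def Applicable (c : Λ → ℕ) (r : Λ × Λ) : Prop := pairConf r ≤ c

/-- The result of applying the transition with inputs `r` (and outputs `δ r`) to `c`. -/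
noncomputable def applyTx (δ : Λ × Λ → Λ × Λ) (r : Λ × Λ) (c : Λ → ℕ) : Λ → ℕ :=
  c - pairConf r + pairConf (δ r)

/-- `PathFrom δ c p c'`: executing the transition sequence `p` (each transition given
by its ordered pair of input states) from `c` is valid and ends in `c'`. -/
inductive PathFrom (δ : Λ × Λ → Λ × Λ) : (Λ → ℕ) → List (Λ × Λ) → (Λ → ℕ) → Prop
  | nil (c : Λ → ℕ) : PathFrom δ c [] c
  | cons {c c' : Λ → ℕ} (r : Λ × Λ) {p : List (Λ × Λ)} :
      Applicable c r → PathFrom δ (applyTx δ r c) p c' → PathFrom δ c (r :: p) c'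

/-- `Reach δ c c'` means `c ⟹ c'`: some finite path leads from `c` to `c'`. -/
def Reach (δ : Λ × Λ → Λ × Λ) (c c' : Λ → ℕ) : Prop := ∃ p, PathFrom δ c p c'

/-- `NoBottleneck δ b c p`: no transition of path `p` executed from `c` is a
`b`-bottleneck for the configuration to which it is applied. -/
inductive NoBottleneck (δ : Λ × Λ → Λ × Λ) (b : ℕ) : (Λ → ℕ) → List (Λ × Λ) → Prop
  | nil (c : Λ → ℕ) : NoBottleneck δ b c []
  | cons {c : Λ → ℕ} (r : Λ × Λ) {p : List (Λ × Λ)} :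
      ¬(c r.1 ≤ b ∧ c r.2 ≤ b) → NoBottleneck δ b (applyTx δ r c) p →
      NoBottleneck δ b c (r :: p)

/-- A configuration is stable w.r.t. output state `y` if the count of `y` can never
change again. -/
def Stable (δ : Λ × Λ → Λ × Λ) (y : Λ) (o : Λ → ℕ) : Prop :=
  ∀ o', Reach δ o o' → o' y = o y

/-- The transition function is symmetric. -/
def Symmetric (δ : Λ × Λ → Λ × Λ) : Prop :=
  ∀ r1 r2 : Λ, δ (r2, r1) = ((δ (r1, r2)).2, (δ (r1, r2)).1)

end PP

open Finset

/-- The protocol `δ` is `Δ`-ordered: the states of `Δ` can be listed as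
`d1, …, dd` so that for each `i` there is a transition `τi : di, si → oi, oi'`
with `si, oi, oi' ∉ {d1, …, di}`. -/
def DeltaOrdered {Λ : Type*} [DecidableEq Λ] (δ : Λ × Λ → Λ × Λ) (Δ : Finset Λ) : Prop :=
  ∃ (ds : List Λ) (sib : ℕ → Λ),
    ds.Nodup ∧ ds.toFinset = Δ ∧
    ∀ (i : ℕ) (hi : i < ds.length),
      sib i ∉ ds.take (i + 1) ∧
      (δ (ds.get ⟨i, hi⟩, sib i)).1 ∉ ds.take (i + 1) ∧
      (δ (ds.get ⟨i, hi⟩, sib i)).2 ∉ ds.take (i + 1)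

section Stmt1Aux

open PP

variable {Λ : Type*} [Fintype Λ] [DecidableEq Λ]

lemma PP.single_apply (s t : Λ) : PP.single s t = if t = s then 1 else 0 := by
  unfold PP.single; congr

lemma PP.reach_refl (δ : Λ × Λ → Λ × Λ) (c : Λ → ℕ) : Reach δ c c := ⟨[], PathFrom.nil c⟩

lemma PP.pathFrom_append {δ : Λ × Λ → Λ × Λ} {a b c : Λ → ℕ} {p q : List (Λ × Λ)}
    (h : PathFrom δ a p b) (h2 : PathFrom δ b q c) : PathFrom δ a (p ++ q) c := by
  induction h with
  | nil => simpa using h2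
  | cons r ha _ ih => exact PathFrom.cons r ha (ih h2)

lemma PP.reach_trans {δ : Λ × Λ → Λ × Λ} {a b c : Λ → ℕ}
    (h : Reach δ a b) (h2 : Reach δ b c) : Reach δ a c := by
  obtain ⟨p, hp⟩ := h; obtain ⟨q, hq⟩ := h2
  exact ⟨p ++ q, PP.pathFrom_append hp hq⟩

lemma PP.applyTx_add {δ : Λ × Λ → Λ × Λ} {r : Λ × Λ} {c e : Λ → ℕ}
    (h : Applicable c r) : applyTx δ r (c + e) = applyTx δ r c + e := by
  funext t
  have ht : pairConf r t ≤ c t := h t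
  simp only [applyTx, Pi.add_apply, Pi.sub_apply]
  omega

lemma PP.pathFrom_add {δ : Λ × Λ → Λ × Λ} {c c' : Λ → ℕ} {p : List (Λ × Λ)} (e : Λ → ℕ)
    (h : PathFrom δ c p c') : PathFrom δ (c + e) p (c' + e) := by
  induction h with
  | nil => exact PathFrom.nil _
  | cons r ha _ ih =>
      refine PathFrom.cons r (ha.trans le_self_add) ?_
      rwa [PP.applyTx_add ha]

lemma PP.reach_add_right {δ : Λ × Λ → Λ × Λ} {c c' : Λ → ℕ} (e : Λ → ℕ)
    (h : Reach δ c c') : Reach δ (c + e) (c' + e) := by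
  obtain ⟨p, hp⟩ := h; exact ⟨p, PP.pathFrom_add e hp⟩

lemma PP.reach_add {δ : Λ × Λ → Λ × Λ} {a a' b b' : Λ → ℕ}
    (h : Reach δ a a') (h2 : Reach δ b b') : Reach δ (a + b) (a' + b') := by
  refine PP.reach_trans (PP.reach_add_right b h) ?_
  rw [add_comm a' b, add_comm a' b']
  exact PP.reach_add_right a' h2

lemma PP.reach_smul {δ : Λ × Λ → Λ × Λ} {c c' : Λ → ℕ} (n : ℕ)
    (h : Reach δ c c') : Reach δ (n • c) (n • c') := by
  induction n with
  | zero => simpa using PP.reach_refl δ 0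
  | succ n ih => rw [succ_nsmul, succ_nsmul]; exact PP.reach_add ih h

lemma PP.reach_sum {δ : Λ × Λ → Λ × Λ} {ι : Type*} [DecidableEq ι] (F : Finset ι)
    (f g : ι → Λ → ℕ) (h : ∀ s, Reach δ (f s) (g s)) :
    Reach δ (∑ s ∈ F, f s) (∑ s ∈ F, g s) := by
  induction F using Finset.induction_on with
  | empty => simpa using PP.reach_refl δ 0
  | insert _ _ hni ih =>
      rw [Finset.sum_insert hni, Finset.sum_insert hni]
      exact PP.reach_add (h _) ih

lemma PP.reach_step (δ : Λ × Λ → Λ × Λ) (a b : Λ) :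
    Reach δ (single a + single b)
      (single (δ (a, b)).1 + single (δ (a, b)).2) := by
  refine ⟨[(a, b)], PathFrom.cons (a, b) (le_of_eq rfl) ?_⟩
  have : applyTx δ (a, b) (single a + single b)
      = single (δ (a, b)).1 + single (δ (a, b)).2 := by
    funext t
    simp only [applyTx, Pi.add_apply, Pi.sub_apply, pairConf]
    omega
  rw [this]; exact PathFrom.nil _

/-- Recursive elimination: `(elim δ ds sib n s).1` is the vector of agents to add
alongside a single agent in state `s`, and `.2` is the resulting vector
(supported on `Γ`) to which the combined configuration can be driven. -/
noncomputable def elimAux (δ : Λ × Λ → Λ × Λ) (ds : List Λ) (sib : ℕ → Λ) :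
    ℕ → Λ → (Λ → ℕ) × (Λ → ℕ)
  | 0, s => (0, PP.single s)
  | (n + 1), s =>
      if s ∈ ds then
        (PP.single (sib (ds.idxOf s))
            + (elimAux δ ds sib n (δ (s, sib (ds.idxOf s))).1).1
            + (elimAux δ ds sib n (δ (s, sib (ds.idxOf s))).2).1,
          (elimAux δ ds sib n (δ (s, sib (ds.idxOf s))).1).2
            + (elimAux δ ds sib n (δ (s, sib (ds.idxOf s))).2).2)
      else (0, PP.single s)

lemma mem_take_of_indexOf_lt {l : List Λ} {a : Λ} {k : ℕ}
    (ha : a ∈ l) (h : l.idxOf a < k) : a ∈ l.take k := by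
  have h1 : l.idxOf a < l.length := List.idxOf_lt_length_iff.mpr ha
  rw [List.mem_take_iff_getElem]
  exact ⟨l.idxOf a, by omega, List.getElem_idxOf h1⟩

lemma elimAux_spec (δ : Λ × Λ → Λ × Λ) (ds : List Λ) (sib : ℕ → Λ)
    (hsib : ∀ (i : ℕ) (hi : i < ds.length),
      sib i ∉ ds.take (i + 1) ∧
      (δ (ds.get ⟨i, hi⟩, sib i)).1 ∉ ds.take (i + 1) ∧
      (δ (ds.get ⟨i, hi⟩, sib i)).2 ∉ ds.take (i + 1)) :
    ∀ (n : ℕ) (s : Λ), (s ∈ ds → ds.length - ds.idxOf s ≤ n) →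
      Reach δ (PP.single s + (elimAux δ ds sib n s).1) ((elimAux δ ds sib n s).2) ∧
      (∀ g, (elimAux δ ds sib n s).2 g ≠ 0 → g ∉ ds) ∧
      (∀ t, (elimAux δ ds sib n s).1 t ≤ 2 ^ (ds.length - ds.idxOf s) - 1) ∧
      (∀ t, (elimAux δ ds sib n s).2 t ≤ 2 ^ (ds.length - ds.idxOf s)) := by
  intro n
  induction n with
  | zero =>
      intro s hs
      have hns : s ∉ ds := by
        intro hmem
        have := hs hmem
        have := List.idxOf_lt_length_iff.mpr hmem
        omega
      refine ⟨?_, ?_, ?_, ?_⟩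
      · simpa [elimAux] using PP.reach_refl δ (PP.single s)
      · intro g hg
        have : g = s := by
          by_contra hne
          simp [elimAux, PP.single_apply, hne] at hg
        simpa [this] using hns
      · intro t; simp [elimAux]
      · intro t
        have : PP.single s t ≤ 1 := by rw [PP.single_apply]; split <;> omega
        calc (elimAux δ ds sib 0 s).2 t = PP.single s t := rfl
          _ ≤ 1 := this
          _ ≤ 2 ^ (ds.length - ds.idxOf s) := Nat.one_le_two_pow
  | succ n ih =>
      intro s hs
      by_cases hm : s ∈ ds
      · -- main case
        have hi : ds.idxOf s < ds.length := List.idxOf_lt_length_iff.mpr hm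
        set i := ds.idxOf s with hidef
        have hget : ds.get ⟨i, hi⟩ = s := by
          rw [List.get_eq_getElem]; exact List.getElem_idxOf hi
        obtain ⟨h1, h2, h3⟩ := hsib i hi
        rw [hget] at h2 h3
        set o1 := (δ (s, sib i)).1 with ho1
        set o2 := (δ (s, sib i)).2 with ho2
        have key : ∀ a : Λ, a ∉ ds.take (i + 1) →
            (a ∈ ds → ds.length - ds.idxOf a ≤ n) ∧
            ds.length - ds.idxOf a ≤ ds.length - (i + 1) := by
          intro a hna
          by_cases hmem : a ∈ ds
          · have hidx : i + 1 ≤ ds.idxOf a := by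
              by_contra hlt
              exact hna (mem_take_of_indexOf_lt hmem (by omega))
            have hn : ds.length - i ≤ n + 1 := hs hm
            constructor
            · intro _; omega
            · omega
          · have : ds.idxOf a = ds.length := List.idxOf_eq_length_iff.mpr hmem
            constructor
            · intro h; exact absurd h hmem
            · omega
        obtain ⟨IH1r, IH1s, IH1a, IH1z⟩ := ih o1 (key o1 h2).1
        obtain ⟨IH2r, IH2s, IH2a, IH2z⟩ := ih o2 (key o2 h3).1
        set A1 := (elimAux δ ds sib n o1).1
        set A2 := (elimAux δ ds sib n o2).1
        set Z1 := (elimAux δ ds sib n o1).2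
        set Z2 := (elimAux δ ds sib n o2).2
        have heq : elimAux δ ds sib (n + 1) s
            = (PP.single (sib i) + A1 + A2, Z1 + Z2) := by
          simp only [elimAux, if_pos hm, ← hidef, ← ho1, ← ho2]
          rfl
        rw [heq]
        have hpowle1 : 2 ^ (ds.length - ds.idxOf o1) ≤ 2 ^ (ds.length - (i + 1)) :=
          Nat.pow_le_pow_right (by norm_num) (key o1 h2).2
        have hpowle2 : 2 ^ (ds.length - ds.idxOf o2) ≤ 2 ^ (ds.length - (i + 1)) :=
          Nat.pow_le_pow_right (by norm_num) (key o2 h3).2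
        have hpow : 2 ^ (ds.length - i) = 2 * 2 ^ (ds.length - (i + 1)) := by
          have : ds.length - i = (ds.length - (i + 1)) + 1 := by omega
          rw [this, pow_succ]; ring
        have hBpos : 1 ≤ 2 ^ (ds.length - (i + 1)) := Nat.one_le_two_pow
        refine ⟨?_, ?_, ?_, ?_⟩
        · -- reach
          have step : Reach δ (PP.single s + PP.single (sib i))
              (PP.single o1 + PP.single o2) := PP.reach_step δ s (sib i)
          have step2 : Reach δ (PP.single s + PP.single (sib i) + (A1 + A2))
              (PP.single o1 + PP.single o2 + (A1 + A2)) :=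
            PP.reach_add_right _ step
          have e1 : PP.single s + (PP.single (sib i) + A1 + A2)
              = PP.single s + PP.single (sib i) + (A1 + A2) := by abel
          have e2 : PP.single o1 + PP.single o2 + (A1 + A2)
              = (PP.single o1 + A1) + (PP.single o2 + A2) := by abel
          rw [e1]
          refine PP.reach_trans step2 ?_
          rw [e2]
          exact PP.reach_add IH1r IH2r
        · -- support
          intro g hg
          have : Z1 g ≠ 0 ∨ Z2 g ≠ 0 := by
            by_contra hc
            push_neg at hc
            simp only [Pi.add_apply] at hg
            omega
          rcases this with h | h
          · exact IH1s g h
          · exact IH2s g h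
        · -- add bound
          intro t
          have b0 : PP.single (sib i) t ≤ 1 := by rw [PP.single_apply]; split <;> omega
          have b1 : A1 t ≤ 2 ^ (ds.length - (i + 1)) - 1 :=
            (IH1a t).trans (by omega)
          have b2 : A2 t ≤ 2 ^ (ds.length - (i + 1)) - 1 :=
            (IH2a t).trans (by omega)
          simp only [Pi.add_apply]
          omega
        · -- out bound
          intro t
          have b1 : Z1 t ≤ 2 ^ (ds.length - (i + 1)) := (IH1z t).trans hpowle1
          have b2 : Z2 t ≤ 2 ^ (ds.length - (i + 1)) := (IH2z t).trans hpowle2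
          simp only [Pi.add_apply]
          omega
      · -- s ∉ ds : same as base case
        have heq : elimAux δ ds sib (n + 1) s = (0, PP.single s) := by
          simp only [elimAux, if_neg hm]
        rw [heq]
        refine ⟨?_, ?_, ?_, ?_⟩
        · simpa using PP.reach_refl δ (PP.single s)
        · intro g hg
          have : g = s := by
            by_contra hne
            simp [PP.single_apply, hne] at hg
          simpa [this] using hm
        · intro t; simp
        · intro t
          have : PP.single s t ≤ 1 := by rw [PP.single_apply]; split <;> omega
          exact this.trans Nat.one_le_two_pow

end Stmt1Aux

/-- If the protocol is `Δ`-ordered (with `d = |Δ|`, `Γ = Λ ∖ Δ`), there are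
matrices `C1 ∈ ℕ^{Γ×Δ}` and `C2 ∈ ℕ^{Λ×Δ}`, with entries `< 2^(d+1)` and `< 2^d`
respectively, such that for every `c^Δ ∈ ℕ^Δ`, letting `e = C2·c^Δ` and
`z^Γ = C1·c^Δ`, we have `c^Δ + e ⟹ z^Γ`. -/
theorem stmt1 {Λ : Type*} [Fintype Λ] [DecidableEq Λ]
    (δ : Λ × Λ → Λ × Λ) (hsym : PP.Symmetric δ)
    (Δ : Finset Λ) (hord : DeltaOrdered δ Δ) :
    ∃ C1 C2 : Λ → Λ → ℕ,
      (∀ g d, C1 g d ≠ 0 → g ∉ Δ ∧ d ∈ Δ) ∧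
      (∀ s d, C2 s d ≠ 0 → d ∈ Δ) ∧
      (∀ g d, C1 g d < 2 ^ (Δ.card + 1)) ∧
      (∀ s d, C2 s d < 2 ^ Δ.card) ∧
      ∀ cΔ : Λ → ℕ, (∀ s ∉ Δ, cΔ s = 0) →
        PP.Reach δ (cΔ + fun s => ∑ t, C2 s t * cΔ t) (fun s => ∑ t, C1 s t * cΔ t) := by
  classical
  obtain ⟨ds, sib, hnd, hΔ, hsib⟩ := hord
  have hcard : Δ.card = ds.length := by
    rw [← hΔ]; exact List.toFinset_card_of_nodup hnd
  have hmemΔ : ∀ s : Λ, s ∈ Δ ↔ s ∈ ds := by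
    intro s; rw [← hΔ, List.mem_toFinset]
  have spec := elimAux_spec δ ds sib hsib ds.length
  have hfuel : ∀ u : Λ, u ∈ ds → ds.length - ds.idxOf u ≤ ds.length := by
    intro u _; omega
  refine ⟨fun g u => if u ∈ ds then (elimAux δ ds sib ds.length u).2 g else 0,
          fun s u => if u ∈ ds then (elimAux δ ds sib ds.length u).1 s else 0,
          ?_, ?_, ?_, ?_, ?_⟩
  · intro g u h
    have h' : (if u ∈ ds then (elimAux δ ds sib ds.length u).2 g else 0) ≠ 0 := h
    by_cases hu : u ∈ ds
    · refine ⟨?_, (hmemΔ u).mpr hu⟩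
      rw [if_pos hu] at h'
      intro hgΔ
      exact (spec u (hfuel u)).2.1 g h' ((hmemΔ g).mp hgΔ)
    · rw [if_neg hu] at h'; exact absurd rfl h'
  · intro s u h
    have h' : (if u ∈ ds then (elimAux δ ds sib ds.length u).1 s else 0) ≠ 0 := h
    by_cases hu : u ∈ ds
    · exact (hmemΔ u).mpr hu
    · rw [if_neg hu] at h'; exact absurd rfl h'
  · intro g u
    show (if u ∈ ds then (elimAux δ ds sib ds.length u).2 g else 0) < 2 ^ (Δ.card + 1)
    rw [hcard]
    have h2 : (0:ℕ) < 2 ^ (ds.length + 1) := Nat.two_pow_pos _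
    by_cases hu : u ∈ ds
    · rw [if_pos hu]
      have hb := (spec u (hfuel u)).2.2.2 g
      have hle : 2 ^ (ds.length - ds.idxOf u) ≤ 2 ^ ds.length :=
        Nat.pow_le_pow_right (by norm_num) (by omega)
      have hlt : 2 ^ ds.length < 2 ^ (ds.length + 1) :=
        Nat.pow_lt_pow_right (by norm_num) (by omega)
      omega
    · rw [if_neg hu]; exact h2
  · intro s u
    show (if u ∈ ds then (elimAux δ ds sib ds.length u).1 s else 0) < 2 ^ Δ.card
    rw [hcard]
    have h2 : (0:ℕ) < 2 ^ ds.length := Nat.two_pow_pos _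
    by_cases hu : u ∈ ds
    · rw [if_pos hu]
      have hb := (spec u (hfuel u)).2.2.1 s
      have hle : 2 ^ (ds.length - ds.idxOf u) ≤ 2 ^ ds.length :=
        Nat.pow_le_pow_right (by norm_num) (by omega)
      have hpos : (1:ℕ) ≤ 2 ^ (ds.length - ds.idxOf u) := Nat.one_le_two_pow
      omega
    · rw [if_neg hu]; exact h2
  · intro cΔ hc0
    have hreach : ∀ u : Λ,
        PP.Reach δ (cΔ u • (PP.single u + (elimAux δ ds sib ds.length u).1))
          (cΔ u • (elimAux δ ds sib ds.length u).2) :=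
      fun u => PP.reach_smul _ (spec u (hfuel u)).1
    have main := PP.reach_sum Finset.univ _ _ hreach
    have hL : (∑ u, cΔ u • (PP.single u + (elimAux δ ds sib ds.length u).1))
        = (cΔ + fun s => ∑ t,
            (if t ∈ ds then (elimAux δ ds sib ds.length t).1 s else 0) * cΔ t) := by
      funext t
      simp only [Finset.sum_apply, Pi.smul_apply, Pi.add_apply, smul_eq_mul, mul_add]
      rw [Finset.sum_add_distrib]
      congr 1
      · simp only [PP.single_apply]
        rw [Finset.sum_congr rfl (fun u _ => by rw [mul_ite, mul_one, mul_zero])]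
        simp
      · refine Finset.sum_congr rfl (fun u _ => ?_)
        by_cases hu : u ∈ ds
        · rw [if_pos hu, mul_comm]
        · have hz : cΔ u = 0 := hc0 u (fun h => hu ((hmemΔ u).mp h))
          rw [if_neg hu, hz, mul_zero, zero_mul]
    have hR : (∑ u, cΔ u • (elimAux δ ds sib ds.length u).2)
        = (fun s => ∑ t,
            (if t ∈ ds then (elimAux δ ds sib ds.length t).2 s else 0) * cΔ t) := by
      funext t
      simp only [Finset.sum_apply, Pi.smul_apply, smul_eq_mul]
      refine Finset.sum_congr rfl (fun u _ => ?_)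
      by_cases hu : u ∈ ds
      · rw [if_pos hu, mul_comm]
      · have hz : cΔ u = 0 := hc0 u (fun h => hu ((hmemΔ u).mp h))
        rw [if_neg hu, hz, mul_zero, zero_mul]
    rw [hL, hR] at main
    exact main
end

section
/- In a population protocol with a designated output state y: instability is closed upwards and stability is closed downwards. That is, for configurations c, c' ∈ ℕ^Λ with c ≤ c', if c is not stable then c' is not stable; equivalently, if o is stable and o' ≤ o, then o' is stable. -/
namespace PP

variable {Λ : Type*} {δ : Λ × Λ → Λ × Λ}

theorem Applicable.add_right {c : Λ → ℕ} {r : Λ × Λ} (h : Applicable c r) (d : Λ → ℕ) :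
    Applicable (c + d) r :=
  le_add_right h

theorem applyTx_add_right {c : Λ → ℕ} {r : Λ × Λ} (h : Applicable c r) (d : Λ → ℕ) :
    applyTx δ r (c + d) = applyTx δ r c + d := by
  rw [applyTx, applyTx, ← tsub_add_eq_add_tsub h, add_right_comm]

theorem PathFrom.add_right {c o : Λ → ℕ} {p : List (Λ × Λ)} (hp : PathFrom δ c p o)
    (d : Λ → ℕ) : PathFrom δ (c + d) p (o + d) := by
  induction hp with
  | nil c => exact .nil _
  | cons r happ _ ih => exact .cons r (happ.add_right d) (applyTx_add_right happ d ▸ ih)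

theorem Reach.add_right {c o : Λ → ℕ} (h : Reach δ c o) (d : Λ → ℕ) :
    Reach δ (c + d) (o + d) :=
  let ⟨p, hp⟩ := h
  ⟨p, hp.add_right d⟩

theorem Stable.of_le {y : Λ} {c c' : Λ → ℕ} (h : c ≤ c') (hs : Stable δ y c') :
    Stable δ y c := by
  obtain ⟨d, rfl⟩ := exists_add_of_le h
  intro o ho
  have hy : o y + d y = c y + d y := hs (o + d) (ho.add_right d)
  omega

end PP

/-- Instability is closed upwards and stability is closed downwards: for
configurations `c ≤ c'`, if `c` is not stable then `c'` is not stable;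
equivalently, if `c'` is stable then so is `c`. -/
theorem stmt4 {Λ : Type*} (δ : Λ × Λ → Λ × Λ) (y : Λ)
    (c c' : Λ → ℕ) (h : c ≤ c') :
    (¬ PP.Stable δ y c → ¬ PP.Stable δ y c') ∧
    (PP.Stable δ y c' → PP.Stable δ y c) :=
  ⟨mt (PP.Stable.of_le h), PP.Stable.of_le h⟩
end

section
/- If a predicate φ : ℕ^k → {0,1} is semilinear (i.e., φ⁻¹(1) is a semilinear subset of ℕ^k) and densely almost constant, then φ is eventually constant. -/
open Finset

/-- `c ∈ ℕ^k` is `α`-dense: every strictly positive coordinate is at least `α‖c‖`,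
where `‖c‖` is the sum of the coordinates. -/
def AlphaDense {k : ℕ} (α : ℝ) (c : Fin k → ℕ) : Prop :=
  ∀ i, 0 < c i → α * (∑ j, (c j : ℝ)) ≤ (c i : ℝ)

/-- A periodic coset in `ℕ^k`:
`{ b + n1·p1 + ⋯ + nl·pl : n1, …, nl ∈ ℕ }`. -/
def IsPeriodicCoset {k : ℕ} (P : Set (Fin k → ℕ)) : Prop :=
  ∃ (base : Fin k → ℕ) (l : ℕ) (per : Fin l → Fin k → ℕ),
    P = {x | ∃ n : Fin l → ℕ, x = base + ∑ i, n i • per i}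

/-- A set is semilinear if it is a finite union of periodic cosets. -/
def Semilinear {k : ℕ} (S : Set (Fin k → ℕ)) : Prop :=
  ∃ (m : ℕ) (P : Fin m → Set (Fin k → ℕ)),
    (∀ j, IsPeriodicCoset (P j)) ∧ S = ⋃ j, P j

/-- `φ` is almost constant on `D`: `φ⁻¹(0) ∩ D` or `φ⁻¹(1) ∩ D` is finite. -/
def AlmostConstantOn {k : ℕ} (φ : (Fin k → ℕ) → Bool) (D : Set (Fin k → ℕ)) : Prop :=
  {m ∈ D | φ m = false}.Finite ∨ {m ∈ D | φ m = true}.Finite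

/-- `φ` is eventually constant: constant on `ℕ^k_{≥m0}` for some `m0`. -/
def EventuallyConstantPred {k : ℕ} (φ : (Fin k → ℕ) → Bool) : Prop :=
  ∃ m0 : ℕ, ∀ m m' : Fin k → ℕ, (∀ i, m0 ≤ m i) → (∀ i, m0 ≤ m' i) → φ m = φ m'

/-!
By the Ginsburg–Spanier theorem (`IsSemilinearSet.compl`) both `φ⁻¹(1)` and `φ⁻¹(0)` are
semilinear. A point with all coordinates larger than the base of the linear component containing
it spans a ray `a + n • q` inside that component with every `q i > 0`; so a semilinear set either
contains such a ray or eventually misses everything. Such a ray is `α`-dense for some `α > 0`, and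
`α`-density only gets easier as `α` decreases. Hence if both `φ⁻¹(0)` and `φ⁻¹(1)` contained a
ray, `φ` would not be almost constant on the `α`-dense vectors for the smaller of the two `α`; so
one of them eventually misses everything, i.e. `φ` is eventually constant.
-/

open Set Filter Pointwise

lemma IsPeriodicCoset.isLinearSet {k : ℕ} {P : Set (Fin k → ℕ)} (hP : IsPeriodicCoset P) :
    IsLinearSet P := by
  obtain ⟨base, l, per, rfl⟩ := hP
  refine ⟨base, range per, finite_range per, ?_⟩
  ext x
  simp only [mem_ofPred_eq, mem_vadd_set, SetLike.mem_coe, vadd_eq_add,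
    AddSubmonoid.mem_closure_range_iff_of_fintype]
  constructor
  · rintro ⟨n, rfl⟩
    exact ⟨_, ⟨n, rfl⟩, rfl⟩
  · rintro ⟨_, ⟨n, rfl⟩, rfl⟩
    exact ⟨n, rfl⟩

lemma Semilinear.isSemilinearSet {k : ℕ} {S : Set (Fin k → ℕ)} (hS : Semilinear S) :
    IsSemilinearSet S := by
  obtain ⟨m, P, hP, rfl⟩ := hS
  exact IsSemilinearSet.iUnion fun j => (hP j).isLinearSet.isSemilinearSet

section Ray

variable {ι : Type*}

def HasPositiveRay (s : Set (ι → ℕ)) : Prop :=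
  ∃ a q : ι → ℕ, (∀ i, 0 < q i) ∧ ∀ n : ℕ, a + n • q ∈ s

lemma IsLinearSet.hasPositiveRay_or_eventually_notMem {s : Set (ι → ℕ)} (hs : IsLinearSet s) :
    HasPositiveRay s ∨ ∀ᶠ x in atTop, x ∉ s := by
  obtain ⟨a, t, -, rfl⟩ := hs
  by_cases h : ∃ x ∈ a +ᵥ (AddSubmonoid.closure t : Set (ι → ℕ)), ∀ i, a i < x i
  · obtain ⟨x, ⟨p, hp, rfl⟩, hx⟩ := h
    refine Or.inl ⟨a, p, fun i => ?_, fun n => ⟨n • p, nsmul_mem hp n, rfl⟩⟩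
    simpa using hx i
  · refine Or.inr (eventually_atTop.2 ⟨a + 1, fun x hx hxs => h ⟨x, hxs, fun i => ?_⟩⟩)
    exact Nat.lt_of_succ_le (hx i)

lemma IsSemilinearSet.hasPositiveRay_or_eventually_notMem {s : Set (ι → ℕ)}
    (hs : IsSemilinearSet s) : HasPositiveRay s ∨ ∀ᶠ x in atTop, x ∉ s := by
  obtain ⟨S, hS, hlin, rfl⟩ := hs
  by_cases h : ∃ t ∈ S, HasPositiveRay t
  · obtain ⟨t, ht, a, q, hq, hray⟩ := h
    exact Or.inl ⟨a, q, hq, fun n => ⟨t, ht, hray n⟩⟩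
  · push Not at h
    have hall : ∀ᶠ x in atTop, ∀ t ∈ S, x ∉ t :=
      (eventually_all_finite hS).2 fun t ht =>
        (hlin t ht).hasPositiveRay_or_eventually_notMem.resolve_left (h t ht)
    exact Or.inr (hall.mono fun x hx ⟨t, ht, hxt⟩ => hx t ht hxt)

end Ray

lemma AlphaDense.of_le {k : ℕ} {α β : ℝ} {c : Fin k → ℕ} (h : AlphaDense β c) (hαβ : α ≤ β) :
    AlphaDense α c := fun i hi =>
  (mul_le_mul_of_nonneg_right hαβ (sum_nonneg fun _ _ => Nat.cast_nonneg _)).trans (h i hi)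

lemma exists_alphaDense_add_succ_smul {k : ℕ} (a q : Fin k → ℕ) (hq : ∀ i, 0 < q i) :
    ∃ α > 0, ∀ n : ℕ, AlphaDense α (a + (n + 1) • q) := by
  set C : ℝ := ∑ j, ((a j + q j : ℕ) : ℝ) + 1
  have hC : 0 < C := by positivity
  refine ⟨C⁻¹, inv_pos.2 hC, fun n i _ => ?_⟩
  have hsum : ∑ j, ((a + (n + 1) • q) j : ℝ) ≤ (n + 1) * C :=
    calc ∑ j, ((a + (n + 1) • q) j : ℝ) ≤ ∑ j, (n + 1) * ((a j + q j : ℕ) : ℝ) := by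
          gcongr with j
          simp only [Pi.add_apply, Pi.smul_apply, smul_eq_mul]
          push_cast
          nlinarith [(a j).cast_nonneg (α := ℝ), n.cast_nonneg (α := ℝ)]
      _ ≤ (n + 1) * C := by
          rw [← mul_sum]
          gcongr
          exact le_add_of_nonneg_right zero_le_one
  have hi : ((n : ℝ) + 1) ≤ ((a + (n + 1) • q) i : ℝ) := by
    have : (1 : ℝ) ≤ q i := by exact_mod_cast hq i
    simp only [Pi.add_apply, Pi.smul_apply, smul_eq_mul]
    push_cast
    nlinarith
  calc C⁻¹ * ∑ j, ((a + (n + 1) • q) j : ℝ) ≤ C⁻¹ * ((n + 1) * C) := by gcongr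
    _ = n + 1 := by field_simp
    _ ≤ _ := hi

lemma HasPositiveRay.exists_infinite_alphaDense {k : ℕ} [Nonempty (Fin k)]
    {s : Set (Fin k → ℕ)} (hs : HasPositiveRay s) : ∃ α > 0, ∀ β ≤ α, {m ∈ {m | AlphaDense β m} | m ∈ s}.Infinite := by
  obtain ⟨a, q, hq, hray⟩ := hs
  obtain ⟨α, hα, hdense⟩ := exists_alphaDense_add_succ_smul a q hq
  have hinj : Function.Injective fun n : ℕ => a + (n + 1) • q := by
    intro m n hmn
    obtain ⟨i⟩ : Nonempty (Fin k) := inferInstance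
    have := congrFun hmn i
    simp only [Pi.add_apply, Pi.smul_apply, smul_eq_mul, add_right_inj] at this
    exact Nat.succ_injective (Nat.eq_of_mul_eq_mul_right (hq i) this)
  refine ⟨α, hα, fun β hβ => (infinite_range_of_injective hinj).mono ?_⟩
  rintro _ ⟨n, rfl⟩
  exact ⟨(hdense n).of_le hβ, hray (n + 1)⟩

lemma EventuallyConstantPred.of_eventually_eq {k : ℕ} {φ : (Fin k → ℕ) → Bool} {b : Bool}
    (h : ∀ᶠ m in atTop, φ m = b) : EventuallyConstantPred φ := by
  obtain ⟨a, ha⟩ := eventually_atTop.1 h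
  have hge : ∀ m : Fin k → ℕ, (∀ i, univ.sup a ≤ m i) → a ≤ m := fun m hm i =>
    (Finset.le_sup (mem_univ i)).trans (hm i)
  exact ⟨univ.sup a, fun m m' hm hm' => (ha m (hge m hm)).trans (ha m' (hge m' hm')).symm⟩

/-- If a predicate `φ : ℕ^k → {0,1}` is semilinear and densely almost constant
(almost constant on the `α`-dense vectors for every `α > 0`), then `φ` is
eventually constant. -/
theorem stmt7 {k : ℕ} (φ : (Fin k → ℕ) → Bool)
    (hsemi : Semilinear {m | φ m = true})
    (hdac : ∀ α : ℝ, 0 < α → AlmostConstantOn φ {m | AlphaDense α m}) :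
    EventuallyConstantPred φ := by
  obtain _ | _ := isEmpty_or_nonempty (Fin k)
  · exact ⟨0, fun m m' _ _ => congrArg φ (Subsingleton.elim m m')⟩
  have hT : IsSemilinearSet {m | φ m = true} := hsemi.isSemilinearSet
  have hF : IsSemilinearSet {m | φ m = false} := by simpa [compl_ofPred] using hT.compl
  rcases hT.hasPositiveRay_or_eventually_notMem with rayT | hTnone
  · rcases hF.hasPositiveRay_or_eventually_notMem with rayF | hFnone
    · obtain ⟨α, hα, hTinf⟩ := rayT.exists_infinite_alphaDense
      obtain ⟨β, hβ, hFinf⟩ := rayF.exists_infinite_alphaDense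
      rcases hdac (min α β) (lt_min hα hβ) with h | h
      · exact (hFinf _ (min_le_right α β) h).elim
      · exact (hTinf _ (min_le_left α β) h).elim
    · exact .of_eventually_eq (b := true) (hFnone.mono fun m hm => by simpa using hm)
  · exact .of_eventually_eq (b := false) (hTnone.mono fun m hm => by simpa using hm)
end

section
/- Let P ⊆ ℕ^k be a periodic coset such that P ∩ ℕ^k_{≥m} is nonempty for every m ∈ ℕ. Then there exists α > 0 such that P contains infinitely many α-dense points. -/
/-
If `P = b + ⟨p₁, …, p_l⟩` meets `ℕ^k_{≥ ‖b‖ + 1}` in a point `b + s`, then `s` lies in the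
period monoid and has every coordinate positive. The points `b + t s` (`t ≥ 1`) then lie in `P`,
are pairwise distinct, and each coordinate `b_i + t s_i ≥ t` is at least `‖b + t s‖ / ‖b + s‖`,
since `‖b + t s‖ ≤ t ‖b + s‖`. So `α = 1 / ‖b + s‖` works.
-/

open Finset

theorem IsPeriodicCoset.exists_base {k : ℕ} {P : Set (Fin k → ℕ)} (hP : IsPeriodicCoset P) :
    ∃ b : Fin k → ℕ, ∀ x ∈ P, ∃ s, x = b + s ∧ ∀ t : ℕ, b + t • s ∈ P := by
  obtain ⟨b, l, per, rfl⟩ := hP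
  refine ⟨b, ?_⟩
  rintro x ⟨n, rfl⟩
  refine ⟨_, rfl, fun t => ⟨fun i => t * n i, ?_⟩⟩
  simp only [smul_sum, smul_smul]

theorem alphaDense_add_nsmul {k : ℕ} (b s : Fin k → ℕ) (hs : ∀ i, 0 < s i) {t : ℕ}
    (ht : 0 < t) : AlphaDense (1 / ∑ j, ((b j : ℝ) + s j)) (b + t • s) := by
  intro i _
  simp only [Pi.add_apply, Pi.smul_apply, smul_eq_mul, Nat.cast_add, Nat.cast_mul]
  have ht' : (1 : ℝ) ≤ t := by exact_mod_cast ht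
  have hsi : (1 : ℝ) ≤ s i := by exact_mod_cast hs i
  have hnorm : ∑ j, ((b j : ℝ) + t * s j) ≤ t * ∑ j, ((b j : ℝ) + s j) := by
    rw [mul_sum]
    gcongr with j
    nlinarith [(b j).cast_nonneg (α := ℝ)]
  set T := ∑ j, ((b j : ℝ) + s j)
  calc 1 / T * ∑ j, ((b j : ℝ) + t * s j)
      ≤ 1 / T * (t * T) := by gcongr
    _ = t * (T / T) := by ring
    _ ≤ t * 1 := by gcongr; exact div_self_le_one T
    _ ≤ b i + t * s i := by nlinarith [(b i).cast_nonneg (α := ℝ)]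

/-- If a periodic coset `P ⊆ ℕ^k` meets `ℕ^k_{≥m}` for every `m`, then there is
`α > 0` such that `P` contains infinitely many `α`-dense points. -/
theorem stmt8 {k : ℕ} (hk : 0 < k) (P : Set (Fin k → ℕ)) (hP : IsPeriodicCoset P)
    (hbig : ∀ m : ℕ, ∃ x ∈ P, ∀ i, m ≤ x i) :
    ∃ α : ℝ, 0 < α ∧ {x ∈ P | AlphaDense α x}.Infinite := by
  have : Nonempty (Fin k) := ⟨⟨0, hk⟩⟩
  obtain ⟨b, hb⟩ := hP.exists_base
  obtain ⟨q, hqP, hq⟩ := hbig ((∑ j, b j) + 1)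
  obtain ⟨s, rfl, hsP⟩ := hb _ hqP
  have hs : ∀ i, 0 < s i := fun i => by
    have := single_le_sum (fun j _ => Nat.zero_le (b j)) (mem_univ i)
    have := hq i
    simp only [Pi.add_apply] at this
    omega
  refine ⟨1 / ∑ j, ((b j : ℝ) + s j), ?_, ?_⟩
  · exact one_div_pos.2 (sum_pos (fun j _ => by have := hs j; positivity) univ_nonempty)
  · have hinj : Function.Injective fun t : ℕ => b + (t + 1) • s := fun t t' h => by
      have h0 := congrFun (add_left_cancel h) ⟨0, hk⟩
      simp only [Pi.smul_apply, smul_eq_mul] at h0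
      have := Nat.eq_of_mul_eq_mul_right (hs _) h0
      omega
    exact Set.infinite_of_injective_forall_mem hinj
      fun t => ⟨hsP (t + 1), alphaDense_add_nsmul b s hs t.succ_pos⟩
end

section
/- Every ℕ-linear function f : ℕ^k → ℕ is stably computed by some function-computing leaderless population protocol. That is, if f(m) = Σ_{i=1}^k ci·m(i) for constants c1,…,ck ∈ ℕ, then there exists a function-computing leaderless population protocol C = (Λ, δ, Σ, y, q) and a linearly bounded function q0 : ℕ^k → ℕ such that for every initial configuration i ∈ ℕ^Λ with i restricted to Σ equal to m, i(q) ≥ q0(m), and i(s) = 0 for all s ∈ Λ ∖ (Σ ∪ {q}), every configuration c reachable from i can reach a stable configuration o with o(y) = f(m). -/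
namespace Stmt15

open PP Finset

/-! ### Generic sum lemmas about configurations -/

section Generic
variable {Λ : Type*} [Fintype Λ]

lemma sum_mul_single (w : Λ → ℕ) (a : Λ) : ∑ s, w s * PP.single a s = w a := by
  classical
  have h : ∀ s, w s * PP.single a s = if s = a then w s else 0 := by
    intro s
    unfold PP.single
    split <;> simp
  rw [Finset.sum_congr rfl (fun s _ => h s), Finset.sum_ite_eq' Finset.univ a w]
  simp

lemma sum_mul_pairConf (w : Λ → ℕ) (r : Λ × Λ) :
    ∑ s, w s * PP.pairConf r s = w r.1 + w r.2 := by
  have h : ∀ s, w s * PP.pairConf r s = w s * PP.single r.1 s + w s * PP.single r.2 s := by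
    intro s; unfold PP.pairConf; simp [Nat.mul_add]
  rw [Finset.sum_congr rfl (fun s _ => h s), Finset.sum_add_distrib,
    sum_mul_single, sum_mul_single]

lemma applyTx_add (δ : Λ × Λ → Λ × Λ) {cc : Λ → ℕ} {r : Λ × Λ}
    (hr : PP.Applicable cc r) (t : Λ) :
    PP.applyTx δ r cc t + PP.pairConf r t = cc t + PP.pairConf (δ r) t := by
  have h : PP.pairConf r t ≤ cc t := hr t
  simp only [PP.applyTx, Pi.add_apply, Pi.sub_apply]
  omega

lemma sum_mul_applyTx (δ : Λ × Λ → Λ × Λ) (w : Λ → ℕ) {cc : Λ → ℕ} {r : Λ × Λ}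
    (hr : PP.Applicable cc r) :
    ∑ s, w s * PP.applyTx δ r cc s + (w r.1 + w r.2)
      = ∑ s, w s * cc s + (w (δ r).1 + w (δ r).2) := by
  have key : ∑ s, (w s * PP.applyTx δ r cc s + w s * PP.pairConf r s)
      = ∑ s, (w s * cc s + w s * PP.pairConf (δ r) s) := by
    refine Finset.sum_congr rfl fun s _ => ?_
    rw [← Nat.mul_add, ← Nat.mul_add, applyTx_add δ hr s]
  rw [Finset.sum_add_distrib, Finset.sum_add_distrib, sum_mul_pairConf, sum_mul_pairConf] at key
  exact key

lemma applyTx_eq_self (δ : Λ × Λ → Λ × Λ) {cc : Λ → ℕ} {r : Λ × Λ}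
    (hr : PP.Applicable cc r) (hid : δ r = r) : PP.applyTx δ r cc = cc := by
  funext t
  have h : PP.pairConf r t ≤ cc t := hr t
  simp only [PP.applyTx, Pi.add_apply, Pi.sub_apply, hid]
  omega

lemma single_self (a : Λ) : PP.single a a = 1 := by unfold PP.single; simp

lemma single_ne {a t : Λ} (h : t ≠ a) : PP.single a t = 0 := by
  unfold PP.single; rw [if_neg h]

lemma applicable_fst {cc : Λ → ℕ} {r : Λ × Λ} (hr : PP.Applicable cc r) : 1 ≤ cc r.1 := by
  have h : PP.pairConf r r.1 ≤ cc r.1 := hr r.1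
  have h2 : PP.pairConf r r.1 = PP.single r.1 r.1 + PP.single r.2 r.1 := rfl
  rw [single_self] at h2
  omega

lemma applicable_snd {cc : Λ → ℕ} {r : Λ × Λ} (hr : PP.Applicable cc r) : 1 ≤ cc r.2 := by
  have h : PP.pairConf r r.2 ≤ cc r.2 := hr r.2
  have h2 : PP.pairConf r r.2 = PP.single r.1 r.2 + PP.single r.2 r.2 := rfl
  rw [single_self] at h2
  omega

end Generic

/-! ### The protocol computing a linear function -/

variable (k : ℕ) (c : Fin k → ℕ)

/-- States: inputs `X i = inl i`, counters `T n = inr (inl n)`,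
output `Y = inr (inr true)`, quiescent `Q = inr (inr false)`. -/
abbrev St : Type := Fin k ⊕ (Fin (Finset.univ.sup c + 1) ⊕ Bool)

def cFin (i : Fin k) : Fin (Finset.univ.sup c + 1) :=
  ⟨c i, Nat.lt_succ_of_le (Finset.le_sup (Finset.mem_univ i))⟩

def predFin (n : Fin (Finset.univ.sup c + 1)) : Fin (Finset.univ.sup c + 1) :=
  ⟨n.1 - 1, by have := n.2; omega⟩

/-- The reaction of a state with a quiescent agent, if any. -/
def act : St k c → Option (St k c × St k c)
  | Sum.inl i => some (Sum.inr (Sum.inl (cFin k c i)), Sum.inr (Sum.inr false))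
  | Sum.inr (Sum.inl n) =>
      if 0 < n.1 then some (Sum.inr (Sum.inl (predFin k c n)), Sum.inr (Sum.inr true))
      else none
  | Sum.inr (Sum.inr _) => none

/-- The transition function. -/
def del : St k c × St k c → St k c × St k c := fun r =>
  if r.2 = Sum.inr (Sum.inr false) then
    match act k c r.1 with
    | some p => p
    | none => r
  else if r.1 = Sum.inr (Sum.inr false) then
    match act k c r.2 with
    | some p => (p.2, p.1)
    | none => r
  else r

lemma del_symm : PP.Symmetric (del k c) := by
  intro a b
  by_cases hb : b = Sum.inr (Sum.inr false) <;>
    by_cases ha : a = Sum.inr (Sum.inr false)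
  · subst ha; subst hb; rfl
  · subst hb
    show del k c (Sum.inr (Sum.inr false), a) = _
    unfold del
    simp only [ha, if_false, if_true, if_pos rfl]
    cases h : act k c a with
    | none => simp [h, ha]
    | some p => simp [h, ha]
  · subst ha
    show del k c (b, Sum.inr (Sum.inr false)) = _
    unfold del
    simp only [hb, if_false, if_true, if_pos rfl]
    cases h : act k c b with
    | none => simp [h, hb]
    | some p => simp [h, hb]
  · unfold del
    simp [ha, hb]

lemma act_X (i : Fin k) :
    act k c (Sum.inl i)
      = some (Sum.inr (Sum.inl (cFin k c i)), Sum.inr (Sum.inr false)) := rfl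

lemma act_T {n : Fin (Finset.univ.sup c + 1)} (hn : 0 < n.1) :
    act k c (Sum.inr (Sum.inl n))
      = some (Sum.inr (Sum.inl (predFin k c n)), Sum.inr (Sum.inr true)) := by
  simp only [act]; rw [if_pos hn]

lemma act_T0 {n : Fin (Finset.univ.sup c + 1)} (hn : ¬ 0 < n.1) :
    act k c (Sum.inr (Sum.inl n)) = none := by
  simp only [act]; rw [if_neg hn]

lemma act_B (bo : Bool) : act k c (Sum.inr (Sum.inr bo)) = none := rfl

lemma del_some {a : St k c} {p : St k c × St k c} (h : act k c a = some p) :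
    del k c (a, Sum.inr (Sum.inr false)) = p := by
  unfold del; simp [h]

lemma del_none_fst {a : St k c} (h : act k c a = none) :
    del k c (a, Sum.inr (Sum.inr false)) = (a, Sum.inr (Sum.inr false)) := by
  unfold del; simp [h]

lemma del_none_snd {b : St k c} (hb : b ≠ Sum.inr (Sum.inr false))
    (h : act k c b = none) :
    del k c (Sum.inr (Sum.inr false), b) = (Sum.inr (Sum.inr false), b) := by
  unfold del; simp [h, hb]

lemma del_swap {b : St k c} {p : St k c × St k c}
    (hb : b ≠ Sum.inr (Sum.inr false)) (h : act k c b = some p) :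
    del k c (Sum.inr (Sum.inr false), b) = (p.2, p.1) := by
  unfold del; simp [h, hb]

lemma del_other {a b : St k c} (ha : a ≠ Sum.inr (Sum.inr false))
    (hb : b ≠ Sum.inr (Sum.inr false)) : del k c (a, b) = (a, b) := by
  unfold del; simp [ha, hb]

/-- Output potential: conserved by every transition. -/
def phi : St k c → ℕ
  | Sum.inl i => c i
  | Sum.inr (Sum.inl n) => n.1
  | Sum.inr (Sum.inr true) => 1
  | Sum.inr (Sum.inr false) => 0

/-- Quiescent demand. -/
def rho : St k c → ℕ
  | Sum.inl i => c i + 1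
  | Sum.inr (Sum.inl n) => n.1 + 1
  | Sum.inr (Sum.inr _) => 0

/-- Termination measure. -/
def mu : St k c → ℕ
  | Sum.inl i => c i + 1
  | Sum.inr (Sum.inl n) => n.1
  | Sum.inr (Sum.inr _) => 0

/-- Indicator of the quiescent state. -/
def qw : St k c → ℕ := fun s => if s = Sum.inr (Sum.inr false) then 1 else 0

lemma single_q (a : St k c) :
    PP.single a (Sum.inr (Sum.inr false)) = qw k c a := by
  unfold PP.single qw
  by_cases h : a = Sum.inr (Sum.inr false)
  · subst h; rw [if_pos rfl, if_pos rfl]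
  · rw [if_neg (fun hh => h hh.symm), if_neg h]

lemma pairConf_q (r : St k c × St k c) :
    PP.pairConf r (Sum.inr (Sum.inr false)) = qw k c r.1 + qw k c r.2 := by
  show PP.single r.1 _ + PP.single r.2 _ = _
  rw [single_q, single_q]

lemma weights_del (w : St k c → ℕ)
    (hX : ∀ i, w (Sum.inr (Sum.inl (cFin k c i))) + w (Sum.inr (Sum.inr false))
        = w (Sum.inl i) + w (Sum.inr (Sum.inr false)))
    (hT : ∀ n : Fin (Finset.univ.sup c + 1), 0 < n.1 →
        w (Sum.inr (Sum.inl (predFin k c n))) + w (Sum.inr (Sum.inr true))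
          = w (Sum.inr (Sum.inl n)) + w (Sum.inr (Sum.inr false)))
    (r : St k c × St k c) :
    w (del k c r).1 + w (del k c r).2 = w r.1 + w r.2 := by
  obtain ⟨a, b⟩ := r
  by_cases hb : b = Sum.inr (Sum.inr false)
  · subst hb
    cases a with
    | inl i => rw [del_some k c (act_X k c i)]; exact hX i
    | inr a' =>
      cases a' with
      | inl n =>
        by_cases hn : 0 < n.1
        · rw [del_some k c (act_T k c hn)]; exact hT n hn
        · rw [del_none_fst k c (act_T0 k c hn)]
      | inr bo => rw [del_none_fst k c (act_B k c bo)]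
  · by_cases ha : a = Sum.inr (Sum.inr false)
    · subst ha
      cases b with
      | inl i =>
        rw [del_swap k c hb (act_X k c i)]
        have := hX i
        simp only []
        omega
      | inr b' =>
        cases b' with
        | inl n =>
          by_cases hn : 0 < n.1
          · rw [del_swap k c hb (act_T k c hn)]
            have := hT n hn
            simp only []
            omega
          · rw [del_none_snd k c hb (act_T0 k c hn)]
        | inr bo =>
          cases bo with
          | false => exact absurd rfl hb
          | true => rw [del_none_snd k c hb (act_B k c true)]
    · rw [del_other k c ha hb]

lemma phi_del (r : St k c × St k c) :
    phi k c (del k c r).1 + phi k c (del k c r).2 = phi k c r.1 + phi k c r.2 := by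
  refine weights_del k c (phi k c) (fun i => ?_) (fun n hn => ?_) r
  · simp [phi, cFin]
  · simp only [phi, cFin, predFin]
    omega

/-- Indicator of non-quiescent states. -/
def nqw : St k c → ℕ := fun s => if s = Sum.inr (Sum.inr false) then 0 else 1

lemma qw_nqw (s : St k c) : qw k c s + nqw k c s = 1 := by
  unfold qw nqw
  by_cases h : s = Sum.inr (Sum.inr false) <;> simp [h]

lemma rho_nqw_del (r : St k c × St k c) :
    (fun s => rho k c s + nqw k c s) (del k c r).1
        + (fun s => rho k c s + nqw k c s) (del k c r).2
      = (fun s => rho k c s + nqw k c s) r.1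
        + (fun s => rho k c s + nqw k c s) r.2 := by
  refine weights_del k c (fun s => rho k c s + nqw k c s) (fun i => ?_) (fun n hn => ?_) r
  · simp [rho, nqw, cFin]
  · simp only [rho, nqw, predFin]
    simp
    omega

lemma rho_del (r : St k c × St k c) :
    rho k c (del k c r).1 + rho k c (del k c r).2 + qw k c r.1 + qw k c r.2
      = rho k c r.1 + rho k c r.2 + qw k c (del k c r).1 + qw k c (del k c r).2 := by
  have h1 := rho_nqw_del k c r
  simp only [] at h1
  have e1 := qw_nqw k c r.1
  have e2 := qw_nqw k c r.2
  have e3 := qw_nqw k c (del k c r).1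
  have e4 := qw_nqw k c (del k c r).2
  omega

/-- The invariant. -/
def Inv (v : ℕ) (cc : St k c → ℕ) : Prop :=
  (∑ s, phi k c s * cc s = v) ∧ (∑ s, rho k c s * cc s ≤ cc (Sum.inr (Sum.inr false)))

lemma inv_step (v : ℕ) {cc : St k c → ℕ} {r : St k c × St k c}
    (hr : PP.Applicable cc r) (h : Inv k c v cc) :
    Inv k c v (PP.applyTx (del k c) r cc) := by
  obtain ⟨h1, h2⟩ := h
  constructor
  · have hs := sum_mul_applyTx (del k c) (phi k c) hr
    have hp := phi_del k c r
    omega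
  · have hs := sum_mul_applyTx (del k c) (rho k c) hr
    have hq := applyTx_add (del k c) hr (Sum.inr (Sum.inr false))
    rw [pairConf_q, pairConf_q] at hq
    have hp := rho_del k c r
    omega

lemma inv_path (v : ℕ) (p : List (St k c × St k c)) :
    ∀ cc cc' : St k c → ℕ, Inv k c v cc → PP.PathFrom (del k c) cc p cc' → Inv k c v cc' := by
  induction p with
  | nil => intro cc cc' h hp; cases hp; exact h
  | cons r p ih =>
    intro cc cc' h hp
    cases hp with
    | cons _ happ hrest => exact ih _ _ (inv_step k c v happ h) hrest

/-- A configuration is dead if it only contains `Q`, `Y` and exhausted counters `T 0`. -/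
def Dead (cc : St k c → ℕ) : Prop :=
  (∀ i, cc (Sum.inl i) = 0) ∧
  (∀ n : Fin (Finset.univ.sup c + 1), 0 < n.1 → cc (Sum.inr (Sum.inl n)) = 0)

lemma act_none_of_dead {cc : St k c → ℕ} (hd : Dead k c cc) {a : St k c}
    (ha : 1 ≤ cc a) : act k c a = none := by
  cases a with
  | inl i => exact absurd ha (by rw [hd.1 i]; omega)
  | inr a' =>
    cases a' with
    | inl n =>
      by_cases hn : 0 < n.1
      · exact absurd ha (by rw [hd.2 n hn]; omega)
      · simp [act, hn]
    | inr bo => cases bo <;> rfl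

lemma del_id_of_dead {cc : St k c → ℕ} (hd : Dead k c cc) {r : St k c × St k c}
    (hr : PP.Applicable cc r) : del k c r = r := by
  have h1 := act_none_of_dead k c hd (applicable_fst hr)
  have h2 := act_none_of_dead k c hd (applicable_snd hr)
  unfold del
  by_cases hb : r.2 = Sum.inr (Sum.inr false)
  · simp [hb, h1]
  · by_cases ha : r.1 = Sum.inr (Sum.inr false)
    · simp [hb, ha, h2]
    · simp [ha, hb]

lemma dead_path {cc : St k c → ℕ} (hd : Dead k c cc) (p : List (St k c × St k c)) :
    ∀ cc' : St k c → ℕ, PP.PathFrom (del k c) cc p cc' → cc' = cc := by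
  induction p with
  | nil => intro cc' hp; cases hp; rfl
  | cons r p ih =>
    intro cc' hp
    cases hp with
    | cons _ happ hrest =>
      have hid := del_id_of_dead k c hd happ
      have heq := applyTx_eq_self (del k c) happ hid
      rw [heq] at hrest
      exact ih _ hrest

lemma dead_stable {cc : St k c → ℕ} (hd : Dead k c cc) :
    PP.Stable (del k c) (Sum.inr (Sum.inr true)) cc := by
  intro o' ⟨p, hp⟩
  rw [dead_path k c hd p o' hp]

lemma applicable_pair {cc : St k c → ℕ} {s : St k c}
    (hs : 1 ≤ cc s) (hq : 1 ≤ cc (Sum.inr (Sum.inr false)))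
    (hne : s ≠ Sum.inr (Sum.inr false)) :
    PP.Applicable cc (s, Sum.inr (Sum.inr false)) := by
  rw [PP.Applicable, Pi.le_def]
  intro t
  show PP.single s t + PP.single (Sum.inr (Sum.inr false)) t ≤ cc t
  by_cases h1 : t = s
  · subst h1
    rw [single_self, single_ne hne]
    omega
  · by_cases h2 : t = Sum.inr (Sum.inr false)
    · subst h2
      rw [single_ne h1, single_self]
      omega
    · rw [single_ne h1, single_ne h2]
      exact Nat.zero_le _

/-- Main convergence lemma: any configuration satisfying the invariant can reach a
stable configuration with the right output count. -/
lemma run (v : ℕ) (M : ℕ) : ∀ cc : St k c → ℕ, Inv k c v cc →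
    (∑ s, mu k c s * cc s ≤ M) →
    ∃ oc : St k c → ℕ, PP.Reach (del k c) cc oc ∧
      PP.Stable (del k c) (Sum.inr (Sum.inr true)) oc ∧
      oc (Sum.inr (Sum.inr true)) = v := by
  induction M with
  | zero =>
    intro cc hinv hmu
    have hz : ∀ s, mu k c s * cc s = 0 := by
      intro s
      have h : mu k c s * cc s ≤ ∑ t, mu k c t * cc t :=
        Finset.single_le_sum (f := fun t => mu k c t * cc t)
          (fun i _ => Nat.zero_le _) (Finset.mem_univ s)
      omega
    have hd : Dead k c cc := by
      constructor
      · intro i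
        have := hz (Sum.inl i)
        simp [mu] at this
        omega
      · intro n hn
        have := hz (Sum.inr (Sum.inl n))
        simp [mu] at this
        rcases this with h | h <;> simp_all
    refine ⟨cc, ⟨[], PP.PathFrom.nil cc⟩, dead_stable k c hd, ?_⟩
    have h1 := hinv.1
    rw [Finset.sum_eq_single (Sum.inr (Sum.inr true))] at h1
    · simpa [phi] using h1
    · intro s _ hne
      cases s with
      | inl i => simp [hd.1 i]
      | inr s' =>
        cases s' with
        | inl n =>
          by_cases hn : 0 < n.1
          · simp [hd.2 n hn]
          · simp only [phi]
            have : n.1 = 0 := by omega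
            simp [this]
        | inr bo =>
          cases bo with
          | false => simp [phi]
          | true => exact absurd rfl hne
    · intro h; exact absurd (Finset.mem_univ _) h
  | succ M ih =>
    intro cc hinv hmu
    by_cases hle : ∑ s, mu k c s * cc s ≤ M
    · exact ih cc hinv hle
    · -- there is an active agent
      have hpos : ∑ s, mu k c s * cc s ≠ 0 := by omega
      obtain ⟨s, -, hs⟩ := Finset.exists_ne_zero_of_sum_ne_zero hpos
      have hs' : mu k c s ≠ 0 ∧ cc s ≠ 0 := Nat.mul_ne_zero_iff.mp hs
      have hccs : 1 ≤ cc s := Nat.one_le_iff_ne_zero.mpr hs'.2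
      have hmus : 1 ≤ mu k c s := Nat.one_le_iff_ne_zero.mpr hs'.1
      have hrhos : 1 ≤ rho k c s := by
        cases s with
        | inl i => simp [rho]
        | inr s' =>
          cases s' with
          | inl n => simp [rho]
          | inr bo => simp [mu] at hmus
      have hq : 1 ≤ cc (Sum.inr (Sum.inr false)) := by
        have h2 := hinv.2
        have h3 : rho k c s * cc s ≤ ∑ t, rho k c t * cc t :=
          Finset.single_le_sum (f := fun t => rho k c t * cc t)
            (fun i _ => Nat.zero_le _) (Finset.mem_univ s)
        have h4 : 1 ≤ rho k c s * cc s := Nat.one_le_iff_ne_zero.mpr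
          (Nat.mul_ne_zero (by omega) hs'.2)
        omega
      have hne : s ≠ Sum.inr (Sum.inr false) := by
        intro h; subst h; simp [mu] at hmus
      have happ := applicable_pair k c hccs hq hne
      set r : St k c × St k c := (s, Sum.inr (Sum.inr false)) with hr
      have hinv' := inv_step k c v happ hinv
      have hsum := sum_mul_applyTx (del k c) (mu k c) happ
      have hdrop : mu k c (del k c r).1 + mu k c (del k c r).2 + 1
          ≤ mu k c r.1 + mu k c r.2 := by
        cases s with
        | inl i =>
          have hdel : del k c r = (Sum.inr (Sum.inl (cFin k c i)), Sum.inr (Sum.inr false)) :=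
            del_some k c (act_X k c i)
          rw [hdel]
          simp [mu, cFin, hr]
        | inr s' =>
          cases s' with
          | inl n =>
            have hn : 0 < n.1 := by
              by_contra h
              have hn0 : n.1 = 0 := by omega
              simp [mu, hn0] at hmus
            have hdel : del k c r = (Sum.inr (Sum.inl (predFin k c n)), Sum.inr (Sum.inr true)) :=
              del_some k c (act_T k c hn)
            rw [hdel]
            simp only [mu, predFin, hr]
            omega
          | inr bo => simp [mu] at hmus
      have hmu' : ∑ t, mu k c t * PP.applyTx (del k c) r cc t ≤ M := by omega
      obtain ⟨oc, ⟨p, hp⟩, hst, hoc⟩ := ih _ hinv' hmu'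
      exact ⟨oc, ⟨r :: p, PP.PathFrom.cons r happ hp⟩, hst, hoc⟩

end Stmt15

open Finset

/-- Every ℕ-linear function `f(m) = Σᵢ cᵢ·m(i)` is stably computed by some
function-computing leaderless population protocol: there are a finite state set
`Λ`, a (symmetric) transition function `δ`, distinct input states, an output
state `y`, a quiescent state `q ∉ Σ`, and a linearly bounded quiescent threshold
`q0`, such that from every valid initial configuration `i` (input counts `m`,
at least `q0(m)` agents in state `q`, all other states absent), every reachable
configuration can reach a stable configuration `o` with `o(y) = f(m)`. -/
theorem stmt15 (k : ℕ) (c : Fin k → ℕ) :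
    ∃ (Λ : Type) (_ : Fintype Λ) (δ : Λ × Λ → Λ × Λ)
      (inputs : Fin k → Λ) (y q : Λ),
      PP.Symmetric δ ∧
      Function.Injective inputs ∧
      q ∉ Set.range inputs ∧
      ∃ (q0 : (Fin k → ℕ) → ℕ) (C : ℕ),
        (∀ m : Fin k → ℕ, q0 m ≤ C * ∑ i, m i) ∧
        ∀ (m : Fin k → ℕ) (init : Λ → ℕ),
          (∀ j, init (inputs j) = m j) →
          q0 m ≤ init q →
          (∀ s, s ∉ Set.range inputs → s ≠ q → init s = 0) →
          ∀ cc : Λ → ℕ, PP.Reach δ init cc →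
            ∃ oc : Λ → ℕ, PP.Reach δ cc oc ∧ PP.Stable δ y oc ∧
              oc y = ∑ i, c i * m i := by
  classical
  refine ⟨Stmt15.St k c, inferInstance, Stmt15.del k c, Sum.inl,
    Sum.inr (Sum.inr true), Sum.inr (Sum.inr false), Stmt15.del_symm k c,
    fun a b h => Sum.inl.inj h, ?_, fun m => ∑ i, (c i + 1) * m i,
    Finset.univ.sup c + 1, ?_, ?_⟩
  · rintro ⟨i, h⟩; cases h
  · intro m
    rw [Finset.mul_sum]
    refine Finset.sum_le_sum fun i _ => Nat.mul_le_mul_right _ ?_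
    have := Finset.le_sup (f := c) (Finset.mem_univ i)
    omega
  · intro m init hin hq h0 cc hreach
    -- initial configuration values
    have hT : ∀ n, init (Sum.inr (Sum.inl n)) = 0 := by
      intro n
      refine h0 _ ?_ (by simp)
      rintro ⟨i, h⟩; cases h
    have hY : init (Sum.inr (Sum.inr true)) = 0 := by
      refine h0 _ ?_ (by simp)
      rintro ⟨i, h⟩; cases h
    -- invariant at the initial configuration
    have hinv : Stmt15.Inv k c (∑ i, c i * m i) init := by
      constructor
      · rw [Fintype.sum_sum_type, Fintype.sum_sum_type]
        simp only [Fintype.sum_bool]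
        simp [Stmt15.phi, hT, hY, hin]
      · rw [Fintype.sum_sum_type, Fintype.sum_sum_type]
        simp only [Fintype.sum_bool]
        simp only [Stmt15.rho, hT, hY, hin, Nat.mul_zero, Finset.sum_const_zero,
          Nat.add_zero]
        simpa using hq
    obtain ⟨p, hp⟩ := hreach
    have hinvcc := Stmt15.inv_path k c _ p init cc hinv hp
    exact Stmt15.run k c (∑ i, c i * m i) (∑ s, Stmt15.mu k c s * cc s) cc hinvcc le_rfl
end

section
/- Consider the population protocol with states Λ = {x, a, b, y, q} whose only non-null transitions are a,x → b,y and b,x → a,q. For m ∈ ℕ and k ≥ 1, let i be the configuration with i(x) = m, i(a) = k, and all other counts 0. Then: (1) from every configuration reachable from i, a configuration with count of x equal to 0 is reachable; and (2) every configuration o reachable from i with o(x) = 0 is stable (with respect to output state y) and satisfies ⌊m/2⌋ ≤ o(y) ≤ ⌊m/2⌋ + k. -/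
/-- The five states of the division-by-two protocol. -/
inductive DivSt : Type
  | x | a | b | y | q
  deriving DecidableEq

/-- The (symmetric) transition function whose only non-null transitions are
`a,x → b,y` and `b,x → a,q`. -/
def divδ : DivSt × DivSt → DivSt × DivSt
  | (DivSt.a, DivSt.x) => (DivSt.b, DivSt.y)
  | (DivSt.x, DivSt.a) => (DivSt.y, DivSt.b)
  | (DivSt.b, DivSt.x) => (DivSt.a, DivSt.q)
  | (DivSt.x, DivSt.b) => (DivSt.q, DivSt.a)
  | r => r

/-!
Along every run the protocol conserves `a + b`, `x + y + q` and `y - q - b` (each transition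
turning an `x` into a `y` also turns an `a` into a `b`, and each one turning an `x` into a `q`
turns a `b` back into an `a`). Once no `x` is left no transition can fire, and the conservation
laws give `2 y = m + b` with `b ≤ k`. As long as some `x` is left, an `a` or a `b` can consume it.
-/

namespace PP

variable {Λ : Type*} {δ : Λ × Λ → Λ × Λ}

theorem applyTx_apply (r : Λ × Λ) (c : Λ → ℕ) (t : Λ) :
    applyTx δ r c t = c t - pairConf r t + pairConf (δ r) t := rfl

theorem applyTx_eq_self {r : Λ × Λ} {c : Λ → ℕ} (h : Applicable c r) (hr : δ r = r) :
    applyTx δ r c = c := by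
  funext t
  have : pairConf r t ≤ c t := h t
  rw [applyTx_apply, hr]
  omega

theorem Reach.refl (c : Λ → ℕ) : Reach δ c c := ⟨[], .nil c⟩

theorem Reach.head {c c' : Λ → ℕ} {r : Λ × Λ} (h : Applicable c r)
    (hc : Reach δ (applyTx δ r c) c') : Reach δ c c' :=
  let ⟨p, hp⟩ := hc
  ⟨r :: p, .cons r h hp⟩

theorem Reach.invariant {P : (Λ → ℕ) → Prop}
    (hP : ∀ c r, Applicable c r → P c → P (applyTx δ r c)) {c c' : Λ → ℕ}
    (h : Reach δ c c') : P c → P c' := by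
  obtain ⟨p, hp⟩ := h
  induction hp with
  | nil => exact id
  | cons r happ _ ih => exact fun hc => ih (hP _ r happ hc)

theorem Reach.eq_of_forall_applicable_null {c c' : Λ → ℕ}
    (hnull : ∀ r, Applicable c r → δ r = r) (h : Reach δ c c') : c' = c :=
  h.invariant (P := (· = c))
    (fun _ r happ hc => by subst hc; exact applyTx_eq_self happ (hnull r happ)) rfl

end PP

namespace DivProtocol

open DivSt

def Invariant (m k : ℕ) (c : DivSt → ℕ) : Prop :=
  c a + c b = k ∧ c x + c y + c q = m ∧ c y = c q + c b

theorem invariant_applyTx {m k : ℕ} {c : DivSt → ℕ} {r : DivSt × DivSt}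
    (h : PP.Applicable c r) (hc : Invariant m k c) : Invariant m k (PP.applyTx divδ r c) := by
  obtain ⟨hab, hxyq, hyqb⟩ := hc
  have hx := h x
  have ha := h a
  have hb := h b
  have hy := h y
  have hq := h q
  obtain ⟨r₁, r₂⟩ := r
  cases r₁ <;> cases r₂ <;>
    simp only [Invariant, PP.applyTx_apply, PP.pairConf, PP.single, Pi.add_apply, divδ,
      reduceCtorEq, if_true, if_false] at hx ha hb hy hq ⊢ <;> omega

theorem divδ_eq_self_of_applicable {c : DivSt → ℕ} (hx : c x = 0) {r : DivSt × DivSt}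
    (h : PP.Applicable c r) : divδ r = r := by
  have hxr := h x
  obtain ⟨r₁, r₂⟩ := r
  cases r₁ <;> cases r₂ <;>
    first
    | rfl
    | simp only [PP.pairConf, PP.single, Pi.add_apply, reduceCtorEq, if_true, if_false] at hxr
      omega

theorem exists_step_consuming_x {c : DivSt → ℕ} (hab : 0 < c a + c b) (hx : 0 < c x) :
    ∃ r, PP.Applicable c r ∧ PP.applyTx divδ r c x + 1 = c x ∧
      PP.applyTx divδ r c a + PP.applyTx divδ r c b = c a + c b := by
  refine ⟨if 0 < c a then (a, x) else (b, x), fun t => ?_, ?_⟩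
  · cases t <;> split_ifs <;>
      simp only [PP.pairConf, PP.single, Pi.add_apply, reduceCtorEq, if_true, if_false] <;> omega
  · split_ifs <;>
      simp only [PP.applyTx_apply, PP.pairConf, PP.single, Pi.add_apply, divδ, reduceCtorEq,
        if_true, if_false] <;> omega

theorem exists_reach_x_eq_zero {c : DivSt → ℕ} (hab : 0 < c a + c b) :
    ∃ c', PP.Reach divδ c c' ∧ c' x = 0 := by
  induction hn : c x generalizing c with
  | zero => exact ⟨c, .refl c, hn⟩
  | succ n ih =>
    obtain ⟨r, happ, hx, hab'⟩ := exists_step_consuming_x hab (by omega)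
    obtain ⟨c', hc', hc'x⟩ := ih (c := PP.applyTx divδ r c) (by omega) (by omega)
    exact ⟨c', hc'.head happ, hc'x⟩

end DivProtocol

/-- For the protocol with transitions `a,x → b,y` and `b,x → a,q`, starting from
the configuration `i` with `i(x) = m`, `i(a) = k ≥ 1` and all other counts `0`:
(1) from every configuration reachable from `i`, a configuration with no `x` is
reachable; and (2) every configuration `o` reachable from `i` with `o(x) = 0` is
stable (w.r.t. output state `y`) and satisfies `⌊m/2⌋ ≤ o(y) ≤ ⌊m/2⌋ + k`. -/
theorem stmt16 (m k : ℕ) (hk : 1 ≤ k) (init : DivSt → ℕ)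
    (hx : init DivSt.x = m) (ha : init DivSt.a = k)
    (hb : init DivSt.b = 0) (hy : init DivSt.y = 0) (hq : init DivSt.q = 0) :
    (∀ c : DivSt → ℕ, PP.Reach divδ init c →
      ∃ c' : DivSt → ℕ, PP.Reach divδ c c' ∧ c' DivSt.x = 0) ∧
    (∀ o : DivSt → ℕ, PP.Reach divδ init o → o DivSt.x = 0 →
      PP.Stable divδ DivSt.y o ∧ m / 2 ≤ o DivSt.y ∧ o DivSt.y ≤ m / 2 + k) := by
  have hinv : ∀ c, PP.Reach divδ init c → DivProtocol.Invariant m k c :=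
    fun c hc => hc.invariant (fun _ _ => DivProtocol.invariant_applyTx)
      ⟨by omega, by omega, by omega⟩
  refine ⟨fun c hc => DivProtocol.exists_reach_x_eq_zero ?_, fun o ho hox => ?_⟩
  · have := (hinv c hc).1
    omega
  obtain ⟨hab, hxyq, hyqb⟩ := hinv o ho
  refine ⟨fun o' ho' => ?_, by omega, by omega⟩
  rw [ho'.eq_of_forall_applicable_null fun _ => DivProtocol.divδ_eq_self_of_applicable hox]
end
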